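/- Let M be a 2n×2n real matrix indexed by Fin n ⊕ Fin n which is both symplectic (M * J * Mᵀ = J with J = Matrix.fromBlocks 0 (−1) 1 0, i.e., M ∈ Matrix.symplecticGroup (Fin n) ℝ) and orthogonal (M * Mᵀ = 1). Then there exists U in the complex unitary group U(n) (Matrix.unitaryGroup (Fin n) ℂ) such that M = Matrix.fromBlocks (Re U) (Im U) (−Im U) (Re U), where Re U and Im U are the entrywise real and imaginary parts of U. -/
import Mathlib


open Matrix

/-- Every real `2n × 2n` matrix that is both symplectic
(`M ∈ Matrix.symplecticGroup (Fin n) ℝ`, i.e. `M * J * Mᵀ = J`) and orthogonal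
(`M * Mᵀ = 1`) arises from a complex unitary matrix `U ∈ U(n)` as the block matrix
`M = fromBlocks (Re U) (Im U) (−Im U) (Re U)`. -/
theorem orthogonal_symplectic_eq_unitary_blockMatrix
    (n : ℕ) (M : Matrix (Fin n ⊕ Fin n) (Fin n ⊕ Fin n) ℝ)
    (hsymp : M ∈ Matrix.symplecticGroup (Fin n) ℝ)
    (horth : M * Mᵀ = 1) :
    ∃ U ∈ Matrix.unitaryGroup (Fin n) ℂ,
      M = Matrix.fromBlocks
            (U.map Complex.re) (U.map Complex.im)
            (-(U.map Complex.im)) (U.map Complex.re) := by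
  have hsymp' := SymplecticGroup.mem_iff.mp hsymp
  have hTM : Mᵀ * M = 1 := mul_eq_one_comm.mp horth
  have hMJ : M * Matrix.J (Fin n) ℝ = Matrix.J (Fin n) ℝ * M := by
    have := congrArg (· * M) hsymp'
    simpa [mul_assoc, hTM] using this
  set A := M.toBlocks₁₁ with hA
  set B := M.toBlocks₁₂ with hB
  set C := M.toBlocks₂₁ with hC
  set D := M.toBlocks₂₂ with hD
  have hM : M = fromBlocks A B C D := (fromBlocks_toBlocks M).symm
  rw [hM, Matrix.J, fromBlocks_multiply, fromBlocks_multiply] at hMJ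
  simp only [Matrix.mul_zero, Matrix.mul_one, Matrix.mul_neg, Matrix.zero_mul,
    Matrix.one_mul, Matrix.neg_mul, zero_add, add_zero, neg_zero] at hMJ
  have hCeq : C = -B := by
    have := congrArg Matrix.toBlocks₂₂ hMJ
    simp only [toBlocks_fromBlocks₂₂] at this
    rw [← this, neg_neg]
  have hDeq : D = A := by
    have := congrArg Matrix.toBlocks₁₂ hMJ
    simp only [toBlocks_fromBlocks₁₂] at this
    exact (neg_inj.mp this).symm
  rw [hCeq, hDeq] at hM
  rw [hM, fromBlocks_transpose, fromBlocks_multiply, ← fromBlocks_one] at horth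
  have h1 : A * Aᵀ + B * Bᵀ = 1 := by
    have := congrArg Matrix.toBlocks₁₁ horth
    simpa only [toBlocks_fromBlocks₁₁] using this
  have h2 : B * Aᵀ = A * Bᵀ := by
    have := congrArg Matrix.toBlocks₁₂ horth
    simp only [toBlocks_fromBlocks₁₂, transpose_neg, Matrix.mul_neg] at this
    linear_combination (norm := module) this
  set f := Complex.ofRealHom with hf
  set A' := A.map f with hA'
  set B' := B.map f with hB'
  refine ⟨A' + Complex.I • B', ?_, ?_⟩
  · rw [Matrix.mem_unitaryGroup_iff]
    have hstar : star (A' + Complex.I • B') = Aᵀ.map f - Complex.I • Bᵀ.map f := by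
      show (A' + Complex.I • B')ᴴ = _
      rw [conjTranspose_add, conjTranspose_smul]
      have : A'ᴴ = Aᵀ.map f := by
        ext i j; simp [hA', hf, Matrix.conjTranspose_apply, Matrix.map_apply, Complex.conj_ofReal]
      have hb : B'ᴴ = Bᵀ.map f := by
        ext i j; simp [hB', hf, Matrix.conjTranspose_apply, Matrix.map_apply, Complex.conj_ofReal]
      rw [this, hb, Complex.star_def, Complex.conj_I, neg_smul, sub_eq_add_neg]
    rw [hstar]
    have hAt : Aᵀ.map f = A'ᵀ := Matrix.transpose_map
    have hBt : Bᵀ.map f = B'ᵀ := Matrix.transpose_map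
    rw [hAt, hBt]
    have h1' : A' * A'ᵀ + B' * B'ᵀ = 1 := by
      have := congrArg (fun X => X.map f) h1
      simpa [Matrix.map_mul, Matrix.map_add, hA', hB', Matrix.transpose_map] using this
    have h2' : B' * A'ᵀ = A' * B'ᵀ := by
      have := congrArg (fun X => X.map f) h2
      simpa [Matrix.map_mul, hA', hB', Matrix.transpose_map] using this
    calc (A' + Complex.I • B') * (A'ᵀ - Complex.I • B'ᵀ)
        = A' * A'ᵀ + B' * B'ᵀ + Complex.I • (B' * A'ᵀ - A' * B'ᵀ) := by
          simp only [Matrix.add_mul, Matrix.mul_sub, Matrix.smul_mul, Matrix.mul_smul,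
            smul_smul, Complex.I_mul_I, neg_one_smul, smul_sub, neg_neg, sub_neg_eq_add]
          match_scalars <;> simp [Complex.I_sq] <;> ring
      _ = 1 := by rw [h2', sub_self, smul_zero, add_zero, h1']
  · have hre : (A' + Complex.I • B').map Complex.re = A := by
      ext i j
      simp [hA', hB', hf, Matrix.map_apply, Matrix.add_apply, Matrix.smul_apply]
    have him : (A' + Complex.I • B').map Complex.im = B := by
      ext i j
      simp [hA', hB', hf, Matrix.map_apply, Matrix.add_apply, Matrix.smul_apply]
    rw [hre, him, ← hM]
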